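/- arXiv:1709.00043 — 4 statements merged into one kernel-verified Lean document; each statement's English description precedes it below -/
import Mathlib

section
/- Let k ≥ 1 be an integer and let ρ be any planar straight-line drawing of the graph G_k. Then there is a set J ⊆ {1, …, k+1} with |J| ≥ k such that for any two distinct indices i, j ∈ J, the intersection of the triangles conv{ρ(u_{i−1}), ρ(u_i), ρ(w_i)} and conv{ρ(u_{j−1}), ρ(u_j), ρ(w_j)} has 2-dimensional Lebesgue measure zero (i.e., at least k of the k+1 drawn pendant triangles are pairwise area-disjoint). -/
open MeasureTheory

noncomputable section

/-- The Euclidean plane. -/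
abbrev Plane : Type := EuclideanSpace ℝ (Fin 2)

/-- A planar straight-line drawing of a simple graph `G`. -/
def IsPlanarDrawing {V : Type} (G : SimpleGraph V) (ρ : V → Plane) : Prop :=
  Function.Injective ρ ∧
  (∀ u v w : V, G.Adj u v → w ≠ u → w ≠ v → ρ w ∉ segment ℝ (ρ u) (ρ v)) ∧
  (∀ u v x y : V, G.Adj u v → G.Adj x y → s(u, v) ≠ s(x, y) →
    segment ℝ (ρ u) (ρ v) ∩ segment ℝ (ρ x) (ρ y) =
      {p : Plane | ∃ w : V, (w = u ∨ w = v) ∧ (w = x ∨ w = y) ∧ p = ρ w})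

/-- Vertices of the graph `G_k`: the apex `v` (`Sum.inl ()`), the fan vertices
`u₀, …, u_{k+1}` (`Sum.inr (Sum.inl j)` for `j : Fin (k+2)`), and the pendant vertices
`w₁, …, w_{k+1}` (`Sum.inr (Sum.inr m)` for `m : Fin (k+1)`, with `m` encoding `w_{m+1}`). -/
abbrev GkV (k : ℕ) : Type := Unit ⊕ Fin (k + 2) ⊕ Fin (k + 1)

/-- The graph `G_k`: the apex `v` is adjacent to every `u_j`; consecutive `u_j` are
adjacent; and the pendant vertex `w_{m+1}` is adjacent to `u_m` and `u_{m+1}`. -/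
def Gk (k : ℕ) : SimpleGraph (GkV k) :=
  SimpleGraph.fromRel fun a b =>
    (∃ j : Fin (k + 2), a = Sum.inl () ∧ b = Sum.inr (Sum.inl j)) ∨
    (∃ i j : Fin (k + 2), a = Sum.inr (Sum.inl i) ∧ b = Sum.inr (Sum.inl j) ∧
      (i : ℕ) + 1 = (j : ℕ)) ∨
    (∃ (m : Fin (k + 1)) (i : Fin (k + 2)), a = Sum.inr (Sum.inr m) ∧
      b = Sum.inr (Sum.inl i) ∧ ((i : ℕ) = (m : ℕ) ∨ (i : ℕ) = (m : ℕ) + 1))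

/-- The drawn pendant triangle of `G_k` with index `m : Fin (k+1)` (encoding the
triangle `{u_m, u_{m+1}, w_{m+1}}`), under the drawing `ρ`. -/
def pendantTriangle {k : ℕ} (ρ : GkV k → Plane) (m : Fin (k + 1)) : Set Plane :=
  convexHull ℝ {ρ (Sum.inr (Sum.inl m.castSucc)), ρ (Sum.inr (Sum.inl m.succ)),
    ρ (Sum.inr (Sum.inr m))}

/-!
In a planar drawing an edge can leave a drawn triangle of the graph only through one of its
corners. Hence a drawn vertex that lies in a triangle without being a corner lies in its interior
and pulls all of its neighbours into the triangle, and two edge-disjoint triangles whose interiors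
meet are nested. For the pendant triangles of `G_k`: a pendant triangle containing another one
contains a fan vertex `u_l` that is not one of its corners, hence the apex `v`; a pendant triangle
containing `v` contains every `u_l`, hence every other pendant triangle, and two pendant triangles
cannot contain each other since `w_j` would be an interior point of the triangle it is a corner
of. So all pendant triangles but at most one miss `v`, and any two of those have intersections
with empty interior, i.e. of measure zero.
-/

open Set Module

theorem IsPreconnected.inter_frontier_nonempty {X : Type*} [TopologicalSpace X] {s t : Set X}
    (hs : IsPreconnected s) (hst : (s ∩ t).Nonempty) (hs_t : (s \ t).Nonempty) :
    (s ∩ frontier t).Nonempty := by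
  by_contra h
  have hcover : s ⊆ interior t ∪ (closure t)ᶜ := fun x hx => by
    by_contra hx'
    simp only [mem_union, mem_compl_iff, not_or, not_not] at hx'
    exact h ⟨x, hx, hx'.2, hx'.1⟩
  have hdisj : Disjoint (interior t) (closure t)ᶜ :=
    disjoint_compl_right.mono_left (interior_subset.trans subset_closure)
  obtain ⟨x, hxs, hxt⟩ := hst
  obtain ⟨y, hys, hyt⟩ := hs_t
  rcases hs.subset_or_subset isOpen_interior isClosed_closure.isOpen_compl hdisj hcover with
    hsub | hsub
  · exact hyt (interior_subset (hsub hys))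
  · exact hsub hxs (subset_closure hxt)

theorem Convex.interior_nonempty_of_addHaar_ne_zero {E : Type*} [NormedAddCommGroup E]
    [NormedSpace ℝ E] [MeasurableSpace E] [BorelSpace E] [FiniteDimensional ℝ E]
    (μ : Measure E) [μ.IsAddHaarMeasure] {s : Set E} (hs : Convex ℝ s) (hμ : μ s ≠ 0) :
    (interior s).Nonempty := by
  by_contra hint
  refine hμ (measure_mono_null ?_ (hs.addHaar_frontier μ))
  rw [frontier, not_nonempty_iff_eq_empty.mp hint, sdiff_empty]
  exact subset_closure

namespace AffineIndependent

variable {E : Type*} [NormedAddCommGroup E] [NormedSpace ℝ E] [FiniteDimensional ℝ E]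
  {p q r : E}

def triangleBasis (h : AffineIndependent ℝ ![p, q, r]) (hE : finrank ℝ E = 2) :
    AffineBasis (Fin 3) ℝ E :=
  ⟨![p, q, r], h, by
    rw [h.affineSpan_eq_top_iff_card_eq_finrank_add_one, hE, Fintype.card_fin]⟩

theorem range_triangleBasis (h : AffineIndependent ℝ ![p, q, r]) (hE : finrank ℝ E = 2) :
    range (h.triangleBasis hE) = {p, q, r} := by
  change range ![p, q, r] = _
  rw [Matrix.range_cons, Matrix.range_cons_cons_empty, singleton_union]

theorem convexHull_triple_eq_nonneg_coord (h : AffineIndependent ℝ ![p, q, r])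
    (hE : finrank ℝ E = 2) :
    convexHull ℝ {p, q, r} = {x | ∀ i, 0 ≤ (h.triangleBasis hE).coord i x} := by
  rw [← h.range_triangleBasis hE, AffineBasis.convexHull_eq_nonneg_coord]

theorem interior_convexHull_triple_eq_pos_coord (h : AffineIndependent ℝ ![p, q, r])
    (hE : finrank ℝ E = 2) :
    interior (convexHull ℝ {p, q, r}) = {x | ∀ i, 0 < (h.triangleBasis hE).coord i x} := by
  rw [← h.range_triangleBasis hE, AffineBasis.interior_convexHull]

theorem right_notMem_interior_convexHull_triple (h : AffineIndependent ℝ ![p, q, r])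
    (hE : finrank ℝ E = 2) : r ∉ interior (convexHull ℝ {p, q, r}) := by
  rw [h.interior_convexHull_triple_eq_pos_coord hE]
  intro hr
  have h0 : (h.triangleBasis hE).coord 0 ((h.triangleBasis hE) 2) = 0 :=
    (h.triangleBasis hE).coord_apply_ne (by decide)
  exact (hr 0).ne' h0

theorem frontier_convexHull_triple_subset (h : AffineIndependent ℝ ![p, q, r])
    (hE : finrank ℝ E = 2) :
    frontier (convexHull ℝ {p, q, r}) ⊆
      segment ℝ p q ∪ segment ℝ q r ∪ segment ℝ r p := by
  intro x hx
  rw [((Set.toFinite _).isCompact_convexHull ℝ).isClosed.frontier_eq,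
    h.interior_convexHull_triple_eq_pos_coord hE, h.convexHull_triple_eq_nonneg_coord hE] at hx
  set b := h.triangleBasis hE
  obtain ⟨hnonneg, hnotpos⟩ := hx
  obtain ⟨i, hi⟩ : ∃ i, b.coord i x = 0 := by
    by_contra! hne
    exact hnotpos fun i => (hnonneg i).lt_of_ne (hne i).symm
  have hsum : ∑ i, b.coord i x = 1 := b.sum_coord_apply_eq_one x
  have hx : ∑ i, b.coord i x • b i = x := by
    rw [← Finset.affineCombination_eq_linear_combination _ _ _ hsum]
    exact b.affineCombination_coord_eq_self x
  simp only [Fin.sum_univ_three] at hsum hx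
  change b.coord 0 x • p + b.coord 1 x • q + b.coord 2 x • r = x at hx
  fin_cases i
  · exact Or.inl (Or.inr ⟨_, _, hnonneg 1, hnonneg 2, by simp_all, by simp_all⟩)
  · exact Or.inr ⟨_, _, hnonneg 2, hnonneg 0, by simp_all [add_comm], by simp_all [add_comm]⟩
  · exact Or.inl (Or.inl ⟨_, _, hnonneg 0, hnonneg 1, by simp_all, by simp_all⟩)

end AffineIndependent

namespace SimpleGraph

variable {V : Type*} {G : SimpleGraph V} {a b c : V}

variable (G) in
def IsTriangle (a b c : V) : Prop := G.Adj a b ∧ G.Adj b c ∧ G.Adj c a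

theorem IsTriangle.rotate (h : G.IsTriangle a b c) : G.IsTriangle b c a :=
  ⟨h.2.1, h.2.2, h.1⟩

end SimpleGraph

section Triangles

variable {V : Type*} {a b c x y : V}

def triangleEdges (a b c : V) : Set (Sym2 V) := {s(a, b), s(b, c), s(c, a)}

theorem triangleEdges_rotate (a b c : V) : triangleEdges b c a = triangleEdges a b c := by
  ext e
  simp only [triangleEdges, mem_insert_iff, mem_singleton_iff]
  tauto

theorem mk_mem_triangleEdges (hx : x ∈ ({a, b, c} : Set V)) (hy : y ∈ ({a, b, c} : Set V))
    (hxy : x ≠ y) : s(x, y) ∈ triangleEdges a b c := by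
  simp only [mem_insert_iff, mem_singleton_iff] at hx hy
  rcases hx with rfl | rfl | rfl <;> rcases hy with rfl | rfl | rfl <;>
    simp_all [triangleEdges, Sym2.eq_swap]

theorem mk_notMem_triangleEdges (hx : x ∉ ({a, b, c} : Set V)) :
    s(x, y) ∉ triangleEdges a b c := by
  simp only [mem_insert_iff, mem_singleton_iff, not_or] at hx
  simp [triangleEdges, hx]

def drawnTriangle (ρ : V → Plane) (a b c : V) : Set Plane := convexHull ℝ {ρ a, ρ b, ρ c}

variable (ρ : V → Plane)

theorem drawnTriangle_rotate (a b c : V) : drawnTriangle ρ b c a = drawnTriangle ρ a b c := by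
  have hrot : ({ρ b, ρ c, ρ a} : Set Plane) = {ρ a, ρ b, ρ c} := by
    ext p
    simp only [mem_insert_iff, mem_singleton_iff]
    tauto
  rw [drawnTriangle, drawnTriangle, hrot]

theorem convex_drawnTriangle (a b c : V) : Convex ℝ (drawnTriangle ρ a b c) :=
  convex_convexHull ℝ _

theorem isClosed_drawnTriangle (a b c : V) : IsClosed (drawnTriangle ρ a b c) :=
  ((toFinite _).isCompact_convexHull ℝ).isClosed

theorem subset_drawnTriangle (a b c : V) : {ρ a, ρ b, ρ c} ⊆ drawnTriangle ρ a b c :=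
  subset_convexHull ℝ _

theorem drawnTriangle_subset {s : Set Plane} (hs : Convex ℝ s) (ha : ρ a ∈ s) (hb : ρ b ∈ s)
    (hc : ρ c ∈ s) : drawnTriangle ρ a b c ⊆ s :=
  convexHull_min (insert_subset ha (insert_subset hb (singleton_subset_iff.mpr hc))) hs

end Triangles

theorem finrank_plane : finrank ℝ Plane = 2 := finrank_euclideanSpace_fin

namespace IsPlanarDrawing

variable {V : Type} {G : SimpleGraph V} {ρ : V → Plane} {a b c x y z : V}

theorem eq_or_eq_of_mem_segment_inter (hρ : IsPlanarDrawing G ρ) (hab : G.Adj a b)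
    (hxy : G.Adj x y) (hne : s(a, b) ≠ s(x, y)) {p : Plane}
    (hpab : p ∈ segment ℝ (ρ a) (ρ b)) (hpxy : p ∈ segment ℝ (ρ x) (ρ y)) :
    p = ρ a ∨ p = ρ b := by
  have hp : p ∈ segment ℝ (ρ a) (ρ b) ∩ segment ℝ (ρ x) (ρ y) := ⟨hpab, hpxy⟩
  rw [hρ.2.2 a b x y hab hxy hne] at hp
  obtain ⟨w, rfl | rfl, -, rfl⟩ := hp
  exacts [Or.inl rfl, Or.inr rfl]

theorem affineIndependent (hρ : IsPlanarDrawing G ρ) (hT : G.IsTriangle a b c) :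
    AffineIndependent ℝ ![ρ a, ρ b, ρ c] := by
  obtain ⟨hab, hbc, hca⟩ := hT
  rw [affineIndependent_iff_not_collinear_set]
  intro hcol
  rcases hcol.wbtw_or_wbtw_or_wbtw with h | h | h
  · exact hρ.2.1 a c b hca.symm hab.ne' hbc.ne h.mem_segment
  · exact hρ.2.1 b a c hab.symm hbc.ne' hca.ne h.mem_segment
  · exact hρ.2.1 c b a hbc.symm hca.ne' hab.ne h.mem_segment

theorem frontier_drawnTriangle_subset (hρ : IsPlanarDrawing G ρ) (hT : G.IsTriangle a b c) :
    frontier (drawnTriangle ρ a b c) ⊆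
      segment ℝ (ρ a) (ρ b) ∪ segment ℝ (ρ b) (ρ c) ∪ segment ℝ (ρ c) (ρ a) :=
  (hρ.affineIndependent hT).frontier_convexHull_triple_subset finrank_plane

theorem mem_interior_drawnTriangle (hρ : IsPlanarDrawing G ρ) (hT : G.IsTriangle a b c)
    (hx : x ∉ ({a, b, c} : Set V)) (hxT : ρ x ∈ drawnTriangle ρ a b c) :
    ρ x ∈ interior (drawnTriangle ρ a b c) := by
  simp only [mem_insert_iff, mem_singleton_iff, not_or] at hx
  by_contra hint
  have hfr : ρ x ∈ frontier (drawnTriangle ρ a b c) := by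
    rw [(isClosed_drawnTriangle ρ a b c).frontier_eq]
    exact ⟨hxT, hint⟩
  rcases hρ.frontier_drawnTriangle_subset hT hfr with (h | h) | h
  · exact hρ.2.1 a b x hT.1 hx.1 hx.2.1 h
  · exact hρ.2.1 b c x hT.2.1 hx.2.1 hx.2.2 h
  · exact hρ.2.1 c a x hT.2.2 hx.2.2 hx.1 h

theorem mem_drawnTriangle_of_segment_meets_interior (hρ : IsPlanarDrawing G ρ)
    (hT : G.IsTriangle a b c) (hxy : G.Adj x y) (he : s(x, y) ∉ triangleEdges a b c)
    {p : Plane} (hp : p ∈ segment ℝ (ρ x) (ρ y))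
    (hpT : p ∈ interior (drawnTriangle ρ a b c)) :
    ρ y ∈ drawnTriangle ρ a b c := by
  -- Otherwise `[p, ρ y]` leaves the triangle at a point `q` of a side; by planarity `q` is an
  -- endpoint of the edge `xy`, but it is neither `ρ y` (outside) nor `ρ x` (before `p`).
  by_contra hy
  obtain ⟨q, hq, hqT⟩ := (convex_segment p (ρ y)).isPreconnected.inter_frontier_nonempty
    ⟨p, left_mem_segment ℝ _ _, interior_subset hpT⟩ ⟨ρ y, right_mem_segment ℝ _ _, hy⟩
  have hqxy : q ∈ segment ℝ (ρ x) (ρ y) :=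
    (convex_segment _ _).segment_subset hp (right_mem_segment ℝ _ _) hq
  simp only [triangleEdges, mem_insert_iff, mem_singleton_iff, not_or] at he
  have hq' : q = ρ x ∨ q = ρ y := by
    rcases hρ.frontier_drawnTriangle_subset hT hqT with (h | h) | h
    · exact hρ.eq_or_eq_of_mem_segment_inter hxy hT.1 he.1 hqxy h
    · exact hρ.eq_or_eq_of_mem_segment_inter hxy hT.2.1 he.2.1 hqxy h
    · exact hρ.eq_or_eq_of_mem_segment_inter hxy hT.2.2 he.2.2 hqxy h
  rcases hq' with rfl | rfl
  · have hpx : p = ρ x := (wbtw_swap_left_iff ℝ (ρ y)).mp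
      ⟨mem_segment_iff_wbtw.mp hq, mem_segment_iff_wbtw.mp hp⟩
    exact disjoint_interior_frontier.notMem_of_mem_left (hpx ▸ hpT) hqT
  · exact hy ((isClosed_drawnTriangle ρ a b c).frontier_subset hqT)

theorem mem_drawnTriangle_of_adj (hρ : IsPlanarDrawing G ρ) (hT : G.IsTriangle a b c)
    (hx : x ∉ ({a, b, c} : Set V)) (hxT : ρ x ∈ drawnTriangle ρ a b c) (hxy : G.Adj x y) :
    ρ y ∈ drawnTriangle ρ a b c :=
  hρ.mem_drawnTriangle_of_segment_meets_interior hT hxy (mk_notMem_triangleEdges hx)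
    (left_mem_segment ℝ _ _) (hρ.mem_interior_drawnTriangle hT hx hxT)

theorem drawnTriangle_subset_of_segment_meets_interior (hρ : IsPlanarDrawing G ρ)
    (hT : G.IsTriangle a b c) (hT' : G.IsTriangle x y z)
    (hdisj : Disjoint (triangleEdges a b c) (triangleEdges x y z)) {p : Plane}
    (hp : p ∈ segment ℝ (ρ x) (ρ y)) (hpT : p ∈ interior (drawnTriangle ρ a b c)) :
    drawnTriangle ρ x y z ⊆ drawnTriangle ρ a b c := by
  have hxy : s(x, y) ∉ triangleEdges a b c :=
    hdisj.notMem_of_mem_right (by simp [triangleEdges])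
  have hyT := hρ.mem_drawnTriangle_of_segment_meets_interior hT hT'.1 hxy hp hpT
  have hxT := hρ.mem_drawnTriangle_of_segment_meets_interior hT hT'.1.symm
    (by rwa [Sym2.eq_swap]) (by rwa [segment_symm]) hpT
  -- `xy` is not a side, so one of its ends is not a corner and pulls `z` in.
  have hzT : ρ z ∈ drawnTriangle ρ a b c := by
    by_cases hx : x ∈ ({a, b, c} : Set V)
    · have hy : y ∉ ({a, b, c} : Set V) := fun hy => hxy (mk_mem_triangleEdges hx hy hT'.1.ne)
      exact hρ.mem_drawnTriangle_of_adj hT hy hyT hT'.2.1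
    · exact hρ.mem_drawnTriangle_of_adj hT hx hxT hT'.2.2.symm
  exact drawnTriangle_subset ρ (convex_drawnTriangle ρ a b c) hxT hyT hzT

theorem drawnTriangle_subset_of_frontier_meets_interior (hρ : IsPlanarDrawing G ρ)
    (hT : G.IsTriangle a b c) (hT' : G.IsTriangle x y z)
    (hdisj : Disjoint (triangleEdges a b c) (triangleEdges x y z)) {p : Plane}
    (hp : p ∈ frontier (drawnTriangle ρ x y z)) (hpT : p ∈ interior (drawnTriangle ρ a b c)) :
    drawnTriangle ρ x y z ⊆ drawnTriangle ρ a b c := by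
  rcases hρ.frontier_drawnTriangle_subset hT' hp with (h | h) | h
  · exact hρ.drawnTriangle_subset_of_segment_meets_interior hT hT' hdisj h hpT
  · rw [← drawnTriangle_rotate ρ x y z]
    rw [← triangleEdges_rotate x y z] at hdisj
    exact hρ.drawnTriangle_subset_of_segment_meets_interior hT hT'.rotate hdisj h hpT
  · rw [← drawnTriangle_rotate ρ x y z, ← drawnTriangle_rotate ρ y z x]
    rw [← triangleEdges_rotate x y z, ← triangleEdges_rotate y z x] at hdisj
    exact hρ.drawnTriangle_subset_of_segment_meets_interior hT hT'.rotate.rotate hdisj h hpT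

theorem drawnTriangle_subset_or_subset (hρ : IsPlanarDrawing G ρ) (hT : G.IsTriangle a b c)
    (hT' : G.IsTriangle x y z) (hdisj : Disjoint (triangleEdges a b c) (triangleEdges x y z))
    (hint : (interior (drawnTriangle ρ a b c) ∩ interior (drawnTriangle ρ x y z)).Nonempty) :
    drawnTriangle ρ x y z ⊆ drawnTriangle ρ a b c ∨
      drawnTriangle ρ a b c ⊆ drawnTriangle ρ x y z := by
  by_cases hsub : drawnTriangle ρ x y z ⊆ drawnTriangle ρ a b c
  · exact Or.inl hsub
  obtain ⟨q, hqT', hqT⟩ := not_subset.mp hsub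
  obtain ⟨o, hoT, hoT'⟩ := hint
  obtain ⟨p, hp, hpT⟩ := (convex_segment o q).isPreconnected.inter_frontier_nonempty
    ⟨o, left_mem_segment ℝ _ _, interior_subset hoT⟩ ⟨q, right_mem_segment ℝ _ _, hqT⟩
  have hop : o ≠ p := fun h => disjoint_interior_frontier.notMem_of_mem_left hoT (h ▸ hpT)
  have hqp : q ≠ p := fun h => hqT (h ▸ (isClosed_drawnTriangle ρ a b c).frontier_subset hpT)
  have hpT' : p ∈ interior (drawnTriangle ρ x y z) :=
    (convex_drawnTriangle ρ x y z).openSegment_interior_self_subset_interior hoT' hqT'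
      (mem_openSegment_of_ne_left_right hop hqp hp)
  exact Or.inr (hρ.drawnTriangle_subset_of_frontier_meets_interior hT' hT hdisj.symm hpT hpT')

theorem not_drawnTriangle_subset_of_subset (hρ : IsPlanarDrawing G ρ) (hT : G.IsTriangle a b c)
    (hT' : G.IsTriangle x y z) (hz : z ∉ ({a, b, c} : Set V))
    (hsub : drawnTriangle ρ x y z ⊆ drawnTriangle ρ a b c) :
    ¬ drawnTriangle ρ a b c ⊆ drawnTriangle ρ x y z := by
  intro hsub'
  have hzT : ρ z ∈ interior (drawnTriangle ρ a b c) :=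
    hρ.mem_interior_drawnTriangle hT hz (hsub (subset_drawnTriangle ρ x y z (by simp)))
  exact (hρ.affineIndependent hT').right_notMem_interior_convexHull_triple finrank_plane
    (interior_mono hsub' hzT)

end IsPlanarDrawing

namespace Gk

variable {k : ℕ} {ρ : GkV k → Plane} {i j : Fin (k + 1)}

def v : GkV k := Sum.inl ()

def u (l : Fin (k + 2)) : GkV k := Sum.inr (Sum.inl l)

-- `w m` is the paper's `w_{m+1}`, the tip of the pendant triangle on `u_m u_{m+1}`.
def w (m : Fin (k + 1)) : GkV k := Sum.inr (Sum.inr m)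

theorem adj_v_u (l : Fin (k + 2)) : (Gk k).Adj v (u l) := by
  rw [Gk, SimpleGraph.fromRel_adj]
  exact ⟨by simp [v, u], Or.inl (Or.inl ⟨l, rfl, rfl⟩)⟩

theorem adj_u_castSucc_u_succ (m : Fin (k + 1)) : (Gk k).Adj (u m.castSucc) (u m.succ) := by
  rw [Gk, SimpleGraph.fromRel_adj]
  exact ⟨by simp [u, Fin.ext_iff], Or.inl (Or.inr (Or.inl ⟨_, _, rfl, rfl, by simp⟩))⟩

theorem adj_w_u {m : Fin (k + 1)} {l : Fin (k + 2)} (hl : l = m.castSucc ∨ l = m.succ) :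
    (Gk k).Adj (w m) (u l) := by
  rw [Gk, SimpleGraph.fromRel_adj]
  refine ⟨by simp [w, u], Or.inl (Or.inr (Or.inr ⟨m, l, rfl, rfl, ?_⟩))⟩
  rcases hl with rfl | rfl <;> simp

theorem isTriangle (m : Fin (k + 1)) : (Gk k).IsTriangle (u m.castSucc) (u m.succ) (w m) :=
  ⟨adj_u_castSucc_u_succ m, (adj_w_u (Or.inr rfl)).symm, adj_w_u (Or.inl rfl)⟩

theorem pendantTriangle_eq (ρ : GkV k → Plane) (m : Fin (k + 1)) :
    pendantTriangle ρ m = drawnTriangle ρ (u m.castSucc) (u m.succ) (w m) := rfl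

theorem disjoint_triangleEdges (hij : i ≠ j) :
    Disjoint (triangleEdges (u i.castSucc) (u i.succ) (w i))
      (triangleEdges (u j.castSucc) (u j.succ) (w j)) := by
  rw [Set.disjoint_left]
  rintro e he he'
  simp only [triangleEdges, mem_insert_iff, mem_singleton_iff] at he he'
  have hij' : (i : ℕ) ≠ j := Fin.val_ne_of_ne hij
  rcases he with rfl | rfl | rfl <;> simp [u, w, Fin.ext_iff] at he' <;> omega

theorem v_notMem (m : Fin (k + 1)) : (v : GkV k) ∉ ({u m.castSucc, u m.succ, w m} : Set _) := by
  simp [v, u, w]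

theorem w_notMem (hij : i ≠ j) : w i ∉ ({u j.castSucc, u j.succ, w j} : Set (GkV k)) := by
  simp [u, w, hij]

theorem exists_u_notMem (hij : i ≠ j) : ∃ l, (l = i.castSucc ∨ l = i.succ) ∧
    u l ∉ ({u j.castSucc, u j.succ, w j} : Set (GkV k)) := by
  rcases lt_or_gt_of_ne hij with hlt | hgt
  · refine ⟨_, Or.inl rfl, ?_⟩
    have := Fin.lt_def.mp hlt
    simp [u, w, Fin.ext_iff]
    omega
  · refine ⟨_, Or.inr rfl, ?_⟩
    have := Fin.lt_def.mp hgt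
    simp [u, w, Fin.ext_iff]
    omega

theorem u_mem_pendantTriangle {m : Fin (k + 1)} {l : Fin (k + 2)}
    (hl : l = m.castSucc ∨ l = m.succ) : ρ (u l) ∈ pendantTriangle ρ m := by
  rw [pendantTriangle_eq]
  exact subset_drawnTriangle ρ _ _ _ (by rcases hl with rfl | rfl <;> simp)

theorem apex_mem_of_pendantTriangle_subset (hρ : IsPlanarDrawing (Gk k) ρ) (hij : i ≠ j)
    (hsub : pendantTriangle ρ j ⊆ pendantTriangle ρ i) : ρ v ∈ pendantTriangle ρ i := by
  obtain ⟨l, hl, hli⟩ := exists_u_notMem hij.symm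
  exact hρ.mem_drawnTriangle_of_adj (isTriangle i) hli (hsub (u_mem_pendantTriangle hl))
    (adj_v_u l).symm

theorem pendantTriangle_subset_of_apex_mem (hρ : IsPlanarDrawing (Gk k) ρ) (hij : i ≠ j)
    (hv : ρ v ∈ pendantTriangle ρ j) : pendantTriangle ρ i ⊆ pendantTriangle ρ j := by
  have hu (l : Fin (k + 2)) : ρ (u l) ∈ pendantTriangle ρ j :=
    hρ.mem_drawnTriangle_of_adj (isTriangle j) (v_notMem j) hv (adj_v_u l)
  obtain ⟨l, hl, hlj⟩ := exists_u_notMem hij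
  have hw : ρ (w i) ∈ pendantTriangle ρ j :=
    hρ.mem_drawnTriangle_of_adj (isTriangle j) hlj (hu l) (adj_w_u hl).symm
  exact drawnTriangle_subset ρ (convex_drawnTriangle ρ _ _ _) (hu _) (hu _) hw

theorem eq_of_apex_mem_pendantTriangle (hρ : IsPlanarDrawing (Gk k) ρ)
    (hi : ρ v ∈ pendantTriangle ρ i) (hj : ρ v ∈ pendantTriangle ρ j) : i = j := by
  by_contra hij
  exact hρ.not_drawnTriangle_subset_of_subset (isTriangle i) (isTriangle j)
    (w_notMem (Ne.symm hij))
    (pendantTriangle_subset_of_apex_mem hρ (Ne.symm hij) hi)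
    (pendantTriangle_subset_of_apex_mem hρ hij hj)

theorem apex_mem_of_volume_inter_ne_zero (hρ : IsPlanarDrawing (Gk k) ρ) (hij : i ≠ j)
    (hvol : volume (pendantTriangle ρ i ∩ pendantTriangle ρ j) ≠ 0) :
    ρ v ∈ pendantTriangle ρ i ∨ ρ v ∈ pendantTriangle ρ j := by
  have hint := ((convex_drawnTriangle ρ _ _ _).inter
    (convex_drawnTriangle ρ _ _ _)).interior_nonempty_of_addHaar_ne_zero volume hvol
  rw [interior_inter] at hint
  rcases hρ.drawnTriangle_subset_or_subset (isTriangle i) (isTriangle j)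
    (disjoint_triangleEdges hij) hint with hsub | hsub
  · exact Or.inl (apex_mem_of_pendantTriangle_subset hρ hij hsub)
  · exact Or.inr (apex_mem_of_pendantTriangle_subset hρ (Ne.symm hij) hsub)

end Gk

theorem Gk_pendant_triangles_areaDisjoint_general (k : ℕ)
    (ρ : GkV k → Plane) (hρ : IsPlanarDrawing (Gk k) ρ) :
    ∃ J : Finset (Fin (k + 1)), k ≤ J.card ∧
      ∀ i ∈ J, ∀ j ∈ J, i ≠ j →
        volume (pendantTriangle ρ i ∩ pendantTriangle ρ j) = 0 := by
  classical
  let covered (m : Fin (k + 1)) : Prop := ρ Gk.v ∈ pendantTriangle ρ m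
  refine ⟨Finset.univ.filter (¬ covered ·), ?_, ?_⟩
  · have hcovered : (Finset.univ.filter covered).card ≤ 1 :=
      Finset.card_le_one.mpr fun i hi j hj =>
        Gk.eq_of_apex_mem_pendantTriangle hρ (Finset.mem_filter.mp hi).2
          (Finset.mem_filter.mp hj).2
    have hsplit := Finset.card_filter_add_card_filter_not (s := Finset.univ) covered
    rw [Finset.card_univ, Fintype.card_fin] at hsplit
    omega
  · intro i hi j hj hij
    by_contra hvol
    rcases Gk.apex_mem_of_volume_inter_ne_zero hρ hij hvol with h | h
    exacts [(Finset.mem_filter.mp hi).2 h, (Finset.mem_filter.mp hj).2 h]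

/-- In any planar straight-line drawing of `G_k`, at least `k` of the `k+1`
drawn pendant triangles are pairwise area-disjoint. -/
theorem Gk_pendant_triangles_areaDisjoint (k : ℕ) (hk : 1 ≤ k)
    (ρ : GkV k → Plane) (hρ : IsPlanarDrawing (Gk k) ρ) :
    ∃ J : Finset (Fin (k + 1)), k ≤ J.card ∧
      ∀ i ∈ J, ∀ j ∈ J, i ≠ j →
        volume (pendantTriangle ρ i ∩ pendantTriangle ρ j) = 0 :=
  Gk_pendant_triangles_areaDisjoint_general k ρ hρ
end
end

section
/- Let A, B, C be affinely independent points in ℝ² such that dist(A,B) ≥ dist(C,A) ≥ dist(B,C) (so AB is a longest edge and BC is a shortest edge of the triangle ABC). Let X and Y be points of the convex hull of {A,B,C} such that the intersection of the triangles conv{A,C,X} and conv{B,C,Y} has 2-dimensional Lebesgue measure zero (the triangles ACX and BCY are area-disjoint). Then the perimeter of triangle ACX is at most perimeter(ABC) − dist(B,C)/2, or the perimeter of triangle BCY is at most perimeter(ABC) − dist(B,C)/2. -/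
/-!
Let `M` be the midpoint of `AB`. If `X` lies in the triangle `ACM`, the convex function
`dist · A + dist · C` is bounded on it by its values at the vertices, and at `M` it is at most
half the perimeter of `ABC`; since `AB` is a longest side this gives the bound for `ACX`. The
same argument, using that `BC` is a shortest side, handles `Y` in the triangle `BCM`. Otherwise
`X` lies strictly on the side of `B` of the median `CM` and `Y` strictly on the side of `A`, and
then the points of `CM` close to `C` are interior points of both `ACX` and `BCY`, so the two
triangles overlap in an open set of positive area.
-/

open MeasureTheory

noncomputable section

def trianglePerimeter (P Q R : Plane) : ℝ := dist P Q + dist Q R + dist R P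

section Module

variable {E : Type*} [AddCommGroup E] [Module ℝ E] {A B C : E} {a b c : ℝ}

theorem mem_convexHull_triple_iff {P Q R X : E} :
    X ∈ convexHull ℝ {P, Q, R} ↔
      ∃ p q r : ℝ, 0 ≤ p ∧ 0 ≤ q ∧ 0 ≤ r ∧ p + q + r = 1 ∧ p • P + q • Q + r • R = X := by
  rw [convexHull_insert (Set.insert_nonempty Q {R}), convexHull_pair, mem_convexJoin]
  constructor
  · rintro ⟨_, rfl, _, ⟨u, v, hu, hv, huv, rfl⟩, e, f, he, hf, hef, rfl⟩
    refine ⟨e, f * u, f * v, he, by positivity, by positivity, by linear_combination f * huv + hef,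
      by module⟩
  · rintro ⟨p, q, r, hp, hq, hr, hpqr, rfl⟩
    rcases eq_or_lt_of_le (add_nonneg hq hr) with hqr | hqr
    · obtain ⟨rfl, rfl⟩ : q = 0 ∧ r = 0 := by constructor <;> linarith
      refine ⟨P, rfl, Q, left_mem_segment ℝ Q R, ?_⟩
      have hp1 : p = 1 := by linarith
      simp [hp1, left_mem_segment]
    · refine ⟨P, rfl, (q / (q + r)) • Q + (r / (q + r)) • R,
        ⟨q / (q + r), r / (q + r), by positivity, by positivity, by field_simp, rfl⟩,
        p, q + r, hp, hqr.le, by linarith, ?_⟩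
      simp only [smul_add, smul_smul]
      field_simp
      abel

theorem smul_add_smul_add_smul_mem_convexHull_midpoint (hb : 0 ≤ b) (hc : 0 ≤ c)
    (habc : a + b + c = 1) (hba : b ≤ a) :
    a • A + b • B + c • C ∈ convexHull ℝ {A, C, midpoint ℝ A B} :=
  mem_convexHull_triple_iff.mpr ⟨a - b, c, 2 * b, by linarith, hc, by linarith, by linarith, by
    rw [midpoint_eq_smul_add, invOf_eq_inv]; module⟩

theorem not_collinear_smul_add_smul_add_smul (h : ¬ Collinear ℝ {A, B, C}) (hb : b ≠ 0)
    (habc : a + b + c = 1) : ¬ Collinear ℝ {A, C, a • A + b • B + c • C} := by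
  intro hcol
  have hAC : A ≠ C := by
    rintro rfl
    exact h (by simpa using collinear_pair ℝ B A)
  obtain ⟨t, ht⟩ := mem_affineSpan_pair_iff_exists_lineMap_eq.mp
    (hcol.mem_affineSpan_of_mem_of_ne (p₃ := a • A + b • B + c • C) (by simp) (by simp) (by simp)
      hAC)
  rw [AffineMap.lineMap_apply_module] at ht
  refine h (Set.insert_comm A B {C} ▸ collinear_insert_of_mem_affineSpan_pair ?_)
  refine mem_affineSpan_pair_iff_exists_lineMap_eq.mpr ⟨(t - c) / b, ?_⟩
  rw [AffineMap.lineMap_apply_module]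
  apply smul_right_injective E hb
  simp only [smul_add, smul_smul]
  field_simp
  linear_combination (norm := module) ht + habc • A

end Module

open Filter Topology Module

section Normed

variable {E : Type*} [NormedAddCommGroup E] [NormedSpace ℝ E] {A B C : E} {a b c : ℝ}

theorem convexHull_exists_dist_add_dist_ge {s : Set E} {x : E} (hx : x ∈ convexHull ℝ s)
    (y z : E) : ∃ x' ∈ s, dist x y + dist x z ≤ dist x' y + dist x' z :=
  ((convexOn_dist y (convex_convexHull ℝ _)).add (convexOn_dist z (convex_convexHull ℝ _))
    ).exists_ge_of_mem_convexHull (subset_convexHull ..) hx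

theorem dist_add_dist_le_of_mem_convexHull_midpoint {X : E} {k : ℝ}
    (hX : X ∈ convexHull ℝ {A, C, midpoint ℝ A B}) (hAC : dist A C ≤ k)
    (hM : (dist A B + dist B C + dist C A) / 2 ≤ k) : dist X A + dist X C ≤ k := by
  obtain ⟨V, hV, hle⟩ := convexHull_exists_dist_add_dist_ge hX A C
  refine hle.trans ?_
  rcases hV with rfl | rfl | rfl
  · simpa using hAC
  · simpa [dist_comm] using hAC
  · have hMC : dist (midpoint ℝ A B) C ≤ (dist A C + dist B C) / 2 := by
      simpa using dist_midpoint_midpoint_le A B C C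
    rw [dist_midpoint_left, Real.norm_ofNat]
    rw [dist_comm C A] at hM
    linarith

theorem smul_add_smul_add_smul_mem_interior_convexHull (hE : finrank ℝ E = 2) {P Q R : E}
    (h : ¬ Collinear ℝ {P, Q, R}) {p q r : ℝ} (hp : 0 < p) (hq : 0 < q) (hr : 0 < r)
    (hpqr : p + q + r = 1) : p • P + q • Q + r • R ∈ interior (convexHull ℝ {P, Q, R}) := by
  have : FiniteDimensional ℝ E := Module.finite_of_finrank_eq_succ hE
  have hind := affineIndependent_iff_not_collinear_set.mpr h
  have htop : affineSpan ℝ (Set.range ![P, Q, R]) = ⊤ := by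
    rw [hind.affineSpan_eq_top_iff_card_eq_finrank_add_one, hE]
    rfl
  let T : AffineBasis (Fin 3) ℝ E := ⟨![P, Q, R], hind, htop⟩
  have hw : ∑ i, ![p, q, r] i = 1 := by simp [Fin.sum_univ_three, hpqr]
  have hcomb : p • P + q • Q + r • R = Finset.univ.affineCombination ℝ T ![p, q, r] := by
    rw [Finset.univ.affineCombination_eq_linear_combination _ _ hw]
    change _ = ∑ i, ![p, q, r] i • ![P, Q, R] i
    simp [Fin.sum_univ_three]
  have hrange : Set.range T = {P, Q, R} := by
    change Set.range ![P, Q, R] = _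
    ext
    simp [or_comm, or_left_comm]
  rw [← hrange, T.interior_convexHull, hcomb]
  intro i
  rw [T.coord_apply_combination_of_mem (Finset.mem_univ i) hw]
  fin_cases i <;> assumption

theorem eventually_lineMap_mem_interior_convexHull (hE : finrank ℝ E = 2)
    (h : ¬ Collinear ℝ {A, B, C}) (ha : 0 ≤ a) (hc : 0 ≤ c) (hab : a < b) (habc : a + b + c = 1) :
    ∀ᶠ r in 𝓝[>] (0 : ℝ), AffineMap.lineMap C (midpoint ℝ A B) r ∈
      interior (convexHull ℝ {A, C, a • A + b • B + c • C}) := by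
  have hb : 0 < b := ha.trans_lt hab
  filter_upwards [Ioo_mem_nhdsGT (show 0 < 2 * b / (2 * b + c) by positivity)] with r ⟨hr0, hr⟩
  rw [lt_div_iff₀ (by positivity)] at hr
  have hZ : AffineMap.lineMap C (midpoint ℝ A B) r = (r * (b - a) / (2 * b)) • A
      + (1 - r * (2 * b + c) / (2 * b)) • C + (r / (2 * b)) • (a • A + b • B + c • C) := by
    rw [AffineMap.lineMap_apply_module, midpoint_eq_smul_add, invOf_eq_inv,
      show c = 1 - a - b by linarith]
    match_scalars <;> field_simp <;> ring
  rw [hZ]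
  refine smul_add_smul_add_smul_mem_interior_convexHull hE
    (not_collinear_smul_add_smul_add_smul h hb.ne' habc)
    (div_pos (mul_pos hr0 (sub_pos.2 hab)) (by positivity))
    (sub_pos.2 ((div_lt_one (by positivity)).2 (by linarith))) (by positivity) ?_
  field_simp
  linear_combination -r * habc

end Normed

/-- If `AB` is a longest and `BC` a shortest side of a (nondegenerate)
triangle `ABC`, and `X`, `Y` are points of the triangle such that the triangles `ACX`
and `BCY` are area-disjoint, then one of `ACX`, `BCY` has perimeter at most
`perimeter(ABC) − dist(B,C)/2`. -/
theorem shrinking_perimeter (A B C X Y : Plane)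
    (hind : AffineIndependent ℝ ![A, B, C])
    (hlong : dist C A ≤ dist A B) (hshort : dist B C ≤ dist C A)
    (hX : X ∈ convexHull ℝ {A, B, C}) (hY : Y ∈ convexHull ℝ {A, B, C})
    (hdisj : volume ((convexHull ℝ {A, C, X}) ∩ (convexHull ℝ {B, C, Y})) = 0) :
    trianglePerimeter A C X ≤ trianglePerimeter A B C - dist B C / 2 ∨
    trianglePerimeter B C Y ≤ trianglePerimeter A B C - dist B C / 2 := by
  have hABC : ¬ Collinear ℝ {A, B, C} := affineIndependent_iff_not_collinear_set.mp hind
  obtain ⟨a, b, c, ha, hb, hc, habc, rfl⟩ := mem_convexHull_triple_iff.mp hX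
  obtain ⟨a', b', c', ha', hb', hc', habc', rfl⟩ := mem_convexHull_triple_iff.mp hY
  rw [add_comm (a' • A)] at hdisj ⊢
  have hBC := dist_nonneg (x := B) (y := C)
  have hAC := dist_comm A C
  rcases le_or_gt b a with hba | hab
  · left
    have := dist_add_dist_le_of_mem_convexHull_midpoint (k := dist A B + dist B C / 2)
      (smul_add_smul_add_smul_mem_convexHull_midpoint (A := A) (B := B) (C := C) hb hc habc hba)
      (by linarith) (by linarith)
    simp only [trianglePerimeter, dist_comm C] at this ⊢
    linarith
  rcases le_or_gt a' b' with hab' | hba'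
  · right
    have := dist_add_dist_le_of_mem_convexHull_midpoint (k := dist A B + dist C A - dist B C / 2)
      (smul_add_smul_add_smul_mem_convexHull_midpoint (A := B) (B := A) (C := C) ha' hc'
        (by linarith) hab') (by linarith) (by linarith [dist_comm B A, dist_comm C B])
    simp only [trianglePerimeter, dist_comm C] at this ⊢
    linarith
  exfalso
  obtain ⟨r, hrX, hrY⟩ := ((eventually_lineMap_mem_interior_convexHull finrank_euclideanSpace_fin
    hABC ha hc hab habc).and (eventually_lineMap_mem_interior_convexHull finrank_euclideanSpace_fin
    (Set.insert_comm A B {C} ▸ hABC) hb' hc' hba' (by linarith))).exists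
  rw [midpoint_comm] at hrY
  exact (isOpen_interior.inter isOpen_interior).measure_ne_zero volume ⟨_, hrX, hrY⟩
    (measure_mono_null (Set.inter_subset_inter interior_subset interior_subset) hdisj)
end
end

section
/- Let A, B, C be affinely independent points in ℝ² with side lengths a = dist(B,C), b = dist(C,A), c = dist(A,B) satisfying a ≤ b ≤ c, and let P = a + b + c be the perimeter of triangle ABC. Then there exists a point D on the closed segment [A,B] such that the triangles CBD and CDA have equal perimeters, this common perimeter equals P/2 + dist(C,D), and it is at most P − a/2. -/
noncomputable section

/-- For a triangle `ABC` with side lengths `a ≤ b ≤ c` and perimeter `P`,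
there is a point `D` on the segment `[A,B]` such that the triangles `CBD` and `CDA` have
equal perimeters, this common perimeter equals `P/2 + dist(C,D)`, and it is at most
`P − a/2`. -/
theorem perimeter_bisecting_point (A B C : Plane)
    (hind : AffineIndependent ℝ ![A, B, C])
    (a b c P : ℝ) (ha : a = dist B C) (hb : b = dist C A) (hc : c = dist A B)
    (hab : a ≤ b) (hbc : b ≤ c) (hP : P = a + b + c) :
    ∃ D ∈ segment ℝ A B,
      trianglePerimeter C B D = trianglePerimeter C D A ∧
      trianglePerimeter C B D = P / 2 + dist C D ∧
      trianglePerimeter C B D ≤ P - a / 2 := by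
  have hAB : A ≠ B := by
    intro h
    have h01 : (0 : Fin 3) = 1 := hind.injective (by simp [h])
    simp at h01
  have hc0 : 0 < c := by rw [hc]; exact dist_pos.2 hAB
  have ha0 : 0 ≤ a := ha ▸ dist_nonneg
  have hb0 : 0 ≤ b := hb ▸ dist_nonneg
  have hba : b ≤ a + c := by
    rw [hb, ha, hc]
    calc dist C A ≤ dist C B + dist B A := dist_triangle _ _ _
    _ = dist B C + dist A B := by rw [dist_comm C B, dist_comm B A]
  set t : ℝ := (a + c - b) / (2 * c) with ht
  have ht0 : 0 ≤ t := by apply div_nonneg <;> linarith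
  have ht1 : t ≤ 1 := by rw [div_le_one (by linarith)]; linarith
  set D : Plane := AffineMap.lineMap A B t with hD
  have hAD : dist A D = (a + c - b) / 2 := by
    rw [hD, dist_left_lineMap, Real.norm_eq_abs, abs_of_nonneg ht0, ← hc, ht]
    field_simp
  have hDB : dist D B = (b + c - a) / 2 := by
    rw [hD, dist_lineMap_right, Real.norm_eq_abs,
      abs_of_nonneg (by linarith : (0:ℝ) ≤ 1 - t), ← hc, ht]
    field_simp; ring
  have hCD : dist C D ≤ b := by
    have key : dist C D ≤ (1 - t) * dist C A + t * dist C B := by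
      calc dist C D = ‖(1 - t) • (C - A) + t • (C - B)‖ := by
            rw [dist_eq_norm, hD, AffineMap.lineMap_apply_module]
            congr 1
            module
        _ ≤ ‖(1 - t) • (C - A)‖ + ‖t • (C - B)‖ := norm_add_le _ _
        _ = (1 - t) * dist C A + t * dist C B := by
            rw [norm_smul, norm_smul, Real.norm_eq_abs, Real.norm_eq_abs,
              abs_of_nonneg (by linarith : (0:ℝ) ≤ 1 - t), abs_of_nonneg ht0,
              dist_eq_norm, dist_eq_norm]
    have hCB : dist C B = a := by rw [ha, dist_comm]
    rw [← hb, hCB] at key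
    nlinarith
  refine ⟨D, ?_, ?_, ?_, ?_⟩
  · rw [segment_eq_image_lineMap]
    exact ⟨t, ⟨ht0, ht1⟩, rfl⟩
  · simp only [trianglePerimeter]
    rw [dist_comm B D, hDB, dist_comm D A, hAD, dist_comm A C, ← hb,
      dist_comm C B, ← ha, dist_comm D C]
    ring
  · simp only [trianglePerimeter]
    rw [dist_comm B D, hDB, dist_comm C B, ← ha, dist_comm D C, hP]
    ring
  · simp only [trianglePerimeter]
    rw [dist_comm B D, hDB, dist_comm C B, ← ha, dist_comm D C, hP]
    linarith
end
end

section
/- Every finite tree (a finite connected acyclic simple graph) admits a planar straight-line drawing in which every edge has length exactly 1. -/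
noncomputable section

/-!
Root the tree and assign to every vertex `u` an interval of slopes
`[slope u, slope u + width u]`, the intervals of the children of `u` being pairwise disjoint
subintervals of that of `u`; the edge from the parent of `u` to `u` is drawn as the unit vector of
slope `slope u`. Then the first coordinate strictly increases away from the root, which separates
edges lying on a common root path, and the subtree of a non-root vertex `c` lies in the cone of
slopes of `c` with apex at the parent of `c`. Two incomparable edges lie in the cones of two
siblings below their lowest common ancestor, and those cones meet only in their common apex.
Measuring directions by slope rather than by angle makes all cone conditions linear.
-/

theorem IsPlanarDrawing.of_orientation {V : Type} {G : SimpleGraph V} {ρ : V → Plane}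
    (R : V → V → Prop) (hR : ∀ ⦃u v⦄, G.Adj u v → R u v ∨ R v u)
    (hinj : Function.Injective ρ)
    (hvert : ∀ ⦃u v w⦄, R u v → w ≠ u → w ≠ v → ρ w ∉ segment ℝ (ρ u) (ρ v))
    (hedge : ∀ ⦃u v x y⦄, R u v → R x y → s(u, v) ≠ s(x, y) →
      segment ℝ (ρ u) (ρ v) ∩ segment ℝ (ρ x) (ρ y) ⊆
        {p | ∃ w, (w = u ∨ w = v) ∧ (w = x ∨ w = y) ∧ p = ρ w}) :
    IsPlanarDrawing G ρ := by
  have endpoint : ∀ {a b w : V}, (w = a ∨ w = b) → ρ w ∈ segment ℝ (ρ a) (ρ b) := by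
    rintro a b w (rfl | rfl)
    exacts [left_mem_segment ℝ _ _, right_mem_segment ℝ _ _]
  refine ⟨hinj, fun u v w huv hwu hwv => ?_, fun u v x y huv hxy hne => ?_⟩
  · rcases hR huv with h | h
    · exact hvert h hwu hwv
    · rw [segment_symm]; exact hvert h hwv hwu
  refine Set.Subset.antisymm ?_
    fun p ⟨w, hwuv, hwxy, hp⟩ => hp ▸ ⟨endpoint hwuv, endpoint hwxy⟩
  wlog h₁ : R u v generalizing u v
  · have := this v u huv.symm (by rwa [Sym2.eq_swap]) ((hR huv).resolve_left h₁)
    rw [segment_symm]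
    simpa only [or_comm (a := _ = v)] using this
  wlog h₂ : R x y generalizing x y
  · have := this y x hxy.symm (by rwa [Sym2.eq_swap (a := y)]) ((hR hxy).resolve_left h₂)
    rw [segment_symm ℝ (ρ x)]
    simpa only [or_comm (a := _ = y)] using this
  exact hedge h₁ h₂ hne

def dirOfSlope (s : ℝ) : Plane := (√(1 + s ^ 2))⁻¹ • !₂[1, s]

lemma dirOfSlope_apply_zero (s : ℝ) : dirOfSlope s 0 = (√(1 + s ^ 2))⁻¹ := by
  simp [dirOfSlope]

lemma dirOfSlope_apply_one (s : ℝ) : dirOfSlope s 1 = (√(1 + s ^ 2))⁻¹ * s := by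
  simp [dirOfSlope]

lemma norm_dirOfSlope (s : ℝ) : ‖dirOfSlope s‖ = 1 := by
  have h : 0 < √(1 + s ^ 2) := Real.sqrt_pos.2 (by positivity)
  rw [dirOfSlope, norm_smul, EuclideanSpace.norm_eq, Fin.sum_univ_two]
  simp [abs_of_pos h, h.ne']

lemma dirOfSlope_apply_zero_pos (s : ℝ) : 0 < dirOfSlope s 0 := by
  rw [dirOfSlope_apply_zero]; positivity

def slopeCone (l h : ℝ) : Set Plane := {z | 0 ≤ z 0 ∧ l * z 0 ≤ z 1 ∧ z 1 ≤ h * z 0}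

lemma zero_mem_slopeCone (l h : ℝ) : 0 ∈ slopeCone l h := by simp [slopeCone]

lemma add_mem_slopeCone {l h : ℝ} {z w : Plane} (hz : z ∈ slopeCone l h)
    (hw : w ∈ slopeCone l h) :
    z + w ∈ slopeCone l h := by
  obtain ⟨hz₀, hz₁, hz₂⟩ := hz
  obtain ⟨hw₀, hw₁, hw₂⟩ := hw
  refine ⟨?_, ?_, ?_⟩ <;> simp only [PiLp.add_apply] <;> linarith

lemma smul_mem_slopeCone {l h t : ℝ} {z : Plane} (ht : 0 ≤ t) (hz : z ∈ slopeCone l h) :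
    t • z ∈ slopeCone l h := by
  obtain ⟨hz₀, hz₁, hz₂⟩ := hz
  refine ⟨?_, ?_, ?_⟩ <;> simp only [PiLp.smul_apply, smul_eq_mul]
  · positivity
  · nlinarith
  · nlinarith

lemma dirOfSlope_mem_slopeCone {l h s : ℝ} (hl : l ≤ s) (hh : s ≤ h) :
    dirOfSlope s ∈ slopeCone l h := by
  have hc := dirOfSlope_apply_zero_pos s
  refine ⟨hc.le, ?_, ?_⟩ <;> rw [dirOfSlope_apply_one, ← dirOfSlope_apply_zero] <;> nlinarith

lemma eq_zero_of_mem_slopeCone_of_lt {l₁ h₁ l₂ h₂ : ℝ} {z : Plane} (hlt : h₁ < l₂)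
    (hz₁ : z ∈ slopeCone l₁ h₁) (hz₂ : z ∈ slopeCone l₂ h₂) : z = 0 := by
  obtain ⟨hz₀, -, hzh⟩ := hz₁
  obtain ⟨-, hzl, -⟩ := hz₂
  have h₀ : z 0 = 0 := by nlinarith
  have h₁ : z 1 = 0 := by rw [h₀] at hzl hzh; linarith
  ext i; fin_cases i <;> simpa

/-- A rooted tree given by parent pointers; `parent root` carries no meaning. -/
structure ParentTree (V : Type*) where
  root : V
  parent : V → V
  depth : V → ℕ
  depth_parent : ∀ u, u ≠ root → depth (parent u) + 1 = depth u

namespace ParentTree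

variable {V : Type*} (T : ParentTree V)

def Step (u v : V) : Prop := u ≠ T.root ∧ T.parent u = v

def IsAncestor (c u : V) : Prop := Relation.ReflTransGen T.Step u c

theorem induction {P : V → Prop} (h : ∀ u, (u ≠ T.root → P (T.parent u)) → P u) (u : V) :
    P u := by
  induction hd : T.depth u using Nat.strong_induction_on generalizing u with
  | _ n ih =>
    refine h u fun hu => ih _ ?_ _ rfl
    have := T.depth_parent u hu
    omega

variable {T}

theorem isAncestor_refl (u : V) : T.IsAncestor u u := Relation.ReflTransGen.refl

theorem IsAncestor.trans {a b c : V} (hab : T.IsAncestor a b) (hbc : T.IsAncestor b c) :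
    T.IsAncestor a c :=
  Relation.ReflTransGen.trans hbc hab

theorem isAncestor_parent {u : V} (hu : u ≠ T.root) : T.IsAncestor (T.parent u) u :=
  Relation.ReflTransGen.single ⟨hu, rfl⟩

theorem IsAncestor.eq_or_isAncestor_parent {c u : V} (h : T.IsAncestor c u) :
    c = u ∨ u ≠ T.root ∧ T.IsAncestor c (T.parent u) := by
  rcases Relation.ReflTransGen.cases_head h with h | ⟨_, ⟨hu, rfl⟩, h⟩
  · exact .inl h.symm
  · exact .inr ⟨hu, h⟩

theorem IsAncestor.eq_or_exists_child {c u : V} (h : T.IsAncestor c u) :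
    c = u ∨ ∃ a, T.Step a c ∧ T.IsAncestor a u := by
  rcases Relation.ReflTransGen.cases_tail h with h | ⟨a, ha, hac⟩
  · exact .inl h
  · exact .inr ⟨a, hac, ha⟩

theorem root_isAncestor (u : V) : T.IsAncestor T.root u := by
  induction u using T.induction with
  | _ u ih =>
    by_cases hu : u = T.root
    · rw [hu]; exact isAncestor_refl _
    · exact (ih hu).trans (isAncestor_parent hu)

theorem eq_root_of_isAncestor_root {c : V} (h : T.IsAncestor c T.root) : c = T.root :=
  h.eq_or_isAncestor_parent.resolve_right fun h => h.1 rfl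

theorem IsAncestor.parent {c u : V} (h : T.IsAncestor c u) (hc : c ≠ T.root) :
    T.IsAncestor (T.parent c) (T.parent u) := by
  rcases h.eq_or_isAncestor_parent with rfl | ⟨-, h⟩
  · exact isAncestor_refl _
  · exact (isAncestor_parent hc).trans h

theorem exists_siblings_of_not_isAncestor {a b : V} (hab : ¬T.IsAncestor a b)
    (hba : ¬T.IsAncestor b a) :
    ∃ a' b' m, T.IsAncestor a' a ∧ T.IsAncestor b' b ∧ a' ≠ b' ∧
      T.Step a' m ∧ T.Step b' m := by
  induction a using T.induction with
  | _ a ih =>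
    have ha : a ≠ T.root := by rintro rfl; exact hab (root_isAncestor b)
    by_cases hpb : T.IsAncestor (T.parent a) b
    · rcases hpb.eq_or_exists_child with hpb | ⟨c, hc, hcb⟩
      · exact absurd (hpb ▸ isAncestor_parent ha) hba
      · exact ⟨a, c, _, isAncestor_refl a, hcb, fun h => hab (h ▸ hcb), ⟨ha, rfl⟩, hc⟩
    · obtain ⟨a', b', m, ha', hb', hne, hm⟩ :=
        ih ha hpb fun h => hba (h.trans (isAncestor_parent ha))
      exact ⟨a', b', m, ha'.trans (isAncestor_parent ha), hb', hne, hm⟩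

variable [Fintype V]

variable (T) in
def width (u : V) : ℝ := (2 * Fintype.card V : ℝ)⁻¹ ^ T.depth u

theorem width_pos (u : V) : 0 < T.width u := by
  have : 0 < Fintype.card V := Fintype.card_pos_iff.2 ⟨u⟩
  unfold width; positivity

theorem width_parent {u : V} (hu : u ≠ T.root) :
    T.width (T.parent u) = 2 * Fintype.card V * T.width u := by
  have : (0 : ℝ) < Fintype.card V := by exact_mod_cast Fintype.card_pos_iff.2 ⟨u⟩
  rw [width, width, ← T.depth_parent u hu, pow_succ]
  field_simp

variable [DecidableEq V]

variable (T)

/-- The children of a vertex receive pairwise disjoint pieces of its slope interval: of its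
`2 * card V` equal pieces, numbered from `0`, the child with index `k` in `V` gets piece
`2k + 1`. -/
def slope (u : V) : ℝ :=
  if _ : u = T.root then 0
  else slope (T.parent u) + (2 * (Fintype.equivFin V u : ℕ) + 1) * T.width u
termination_by T.depth u
decreasing_by have := T.depth_parent u ‹_›; omega

def pos (u : V) : Plane :=
  if _ : u = T.root then 0 else pos (T.parent u) + dirOfSlope (T.slope u)
termination_by T.depth u
decreasing_by have := T.depth_parent u ‹_›; omega

def cone (u : V) : Set Plane := slopeCone (T.slope u) (T.slope u + T.width u)

variable {T}

theorem slope_of_ne_root {u : V} (hu : u ≠ T.root) :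
    T.slope u = T.slope (T.parent u) + (2 * (Fintype.equivFin V u : ℕ) + 1) * T.width u := by
  rw [slope, dif_neg hu]

theorem pos_of_ne_root {u : V} (hu : u ≠ T.root) :
    T.pos u = T.pos (T.parent u) + dirOfSlope (T.slope u) := by
  rw [pos, dif_neg hu]

theorem slope_interval_parent {u : V} (hu : u ≠ T.root) :
    T.slope (T.parent u) ≤ T.slope u ∧
      T.slope u + T.width u ≤ T.slope (T.parent u) + T.width (T.parent u) := by
  have hk : ((Fintype.equivFin V u : ℕ) : ℝ) + 1 ≤ Fintype.card V := by
    exact_mod_cast (Fintype.equivFin V u).isLt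
  have hw := T.width_pos u
  rw [slope_of_ne_root hu, width_parent hu]
  constructor <;> nlinarith

theorem IsAncestor.slope_interval {c u : V} (h : T.IsAncestor c u) :
    T.slope c ≤ T.slope u ∧ T.slope u + T.width u ≤ T.slope c + T.width c := by
  induction h using Relation.ReflTransGen.head_induction_on with
  | refl => exact ⟨le_rfl, le_rfl⟩
  | head hstep _ ih =>
    obtain ⟨hu, rfl⟩ := hstep
    have := slope_interval_parent hu
    constructor <;> linarith [ih.1, ih.2]

theorem slope_interval_disjoint_of_siblings {a b m : V} (ha : T.Step a m) (hb : T.Step b m)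
    (hab : a ≠ b) :
    T.slope a + T.width a < T.slope b ∨ T.slope b + T.width b < T.slope a := by
  obtain ⟨ha, rfl⟩ := ha
  obtain ⟨hb, hm⟩ := hb
  have hw : T.width a = T.width b := by
    rw [width, width, ← T.depth_parent a ha, ← T.depth_parent b hb, hm]
  have hk : (Fintype.equivFin V a : ℕ) ≠ Fintype.equivFin V b := by
    simpa [Fin.val_inj] using hab
  rw [slope_of_ne_root ha, slope_of_ne_root hb, hm, ← hw]
  have := T.width_pos a
  rcases Nat.lt_or_gt_of_ne hk with hk | hk
  · have : ((Fintype.equivFin V a : ℕ) : ℝ) + 1 ≤ (Fintype.equivFin V b : ℕ) := by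
      exact_mod_cast hk
    left; nlinarith
  · have : ((Fintype.equivFin V b : ℕ) : ℝ) + 1 ≤ (Fintype.equivFin V a : ℕ) := by
      exact_mod_cast hk
    right; nlinarith

theorem pos_parent_apply_zero_lt {u : V} (hu : u ≠ T.root) :
    T.pos (T.parent u) 0 < T.pos u 0 := by
  rw [pos_of_ne_root hu, PiLp.add_apply]
  linarith [dirOfSlope_apply_zero_pos (T.slope u)]

theorem IsAncestor.pos_apply_zero_le {c u : V} (h : T.IsAncestor c u) :
    T.pos c 0 ≤ T.pos u 0 := by
  induction h using Relation.ReflTransGen.head_induction_on with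
  | refl => exact le_rfl
  | head hstep _ ih =>
    obtain ⟨hu, rfl⟩ := hstep
    exact ih.trans (pos_parent_apply_zero_lt hu).le

theorem IsAncestor.pos_apply_zero_lt {c u : V} (h : T.IsAncestor c u) (hne : c ≠ u) :
    T.pos c 0 < T.pos u 0 := by
  obtain ⟨hu, h⟩ := h.eq_or_isAncestor_parent.resolve_left hne
  exact h.pos_apply_zero_le.trans_lt (pos_parent_apply_zero_lt hu)

theorem exists_eq_of_mem_edge {a : V} (ha : a ≠ T.root) {p : Plane}
    (hp : p ∈ segment ℝ (T.pos (T.parent a)) (T.pos a)) :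
    ∃ t ∈ Set.Icc (0 : ℝ) 1, p = T.pos (T.parent a) + t • dirOfSlope (T.slope a) := by
  rw [segment_eq_image', pos_of_ne_root ha, add_sub_cancel_left] at hp
  obtain ⟨t, ht, rfl⟩ := hp
  exact ⟨t, ht, rfl⟩

theorem eq_parent_of_mem_edge_of_apply_zero_le {a m : V} (ha : a ≠ T.root)
    (hm : T.IsAncestor m (T.parent a)) {p : Plane}
    (hp : p ∈ segment ℝ (T.pos (T.parent a)) (T.pos a)) (hle : p 0 ≤ T.pos m 0) :
    m = T.parent a ∧ p = T.pos (T.parent a) := by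
  obtain ⟨t, ⟨ht₀, -⟩, rfl⟩ := exists_eq_of_mem_edge ha hp
  have hd := dirOfSlope_apply_zero_pos (T.slope a)
  simp only [PiLp.add_apply, PiLp.smul_apply, smul_eq_mul] at hle
  have hm_le := hm.pos_apply_zero_le
  have ht : t = 0 := by nlinarith
  subst ht
  refine ⟨by_contra fun hne => ?_, by simp⟩
  linarith [hm.pos_apply_zero_lt hne]

theorem IsAncestor.pos_sub_mem_cone {a c : V} (h : T.IsAncestor c a) (hc : c ≠ T.root) :
    T.pos (T.parent a) - T.pos (T.parent c) ∈ T.cone c := by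
  induction h using Relation.ReflTransGen.head_induction_on with
  | refl => rw [sub_self]; exact zero_mem_slopeCone _ _
  | @head a _ hstep hca ih =>
    obtain ⟨-, rfl⟩ := hstep
    have ha : T.parent a ≠ T.root := fun h => hc (eq_root_of_isAncestor_root (h ▸ hca))
    have hI := IsAncestor.slope_interval hca
    have hw := T.width_pos (T.parent a)
    rw [pos_of_ne_root ha, add_sub_right_comm]
    exact add_mem_slopeCone ih (dirOfSlope_mem_slopeCone hI.1 (by linarith))

theorem sub_mem_cone_of_mem_edge {a c : V} (ha : a ≠ T.root) (hc : c ≠ T.root)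
    (hca : T.IsAncestor c a) {p : Plane}
    (hp : p ∈ segment ℝ (T.pos (T.parent a)) (T.pos a)) :
    p - T.pos (T.parent c) ∈ T.cone c := by
  obtain ⟨t, ⟨ht₀, -⟩, rfl⟩ := exists_eq_of_mem_edge ha hp
  have hI := hca.slope_interval
  have hw := T.width_pos a
  rw [add_sub_right_comm]
  exact add_mem_slopeCone (hca.pos_sub_mem_cone hc)
    (smul_mem_slopeCone ht₀ (dirOfSlope_mem_slopeCone hI.1 (by linarith)))

theorem eq_zero_of_mem_cone_of_siblings {a b m : V} (ha : T.Step a m) (hb : T.Step b m)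
    (hab : a ≠ b) {z : Plane} (hza : z ∈ T.cone a) (hzb : z ∈ T.cone b) : z = 0 := by
  rcases slope_interval_disjoint_of_siblings ha hb hab with h | h
  · exact eq_zero_of_mem_slopeCone_of_lt h hza hzb
  · exact eq_zero_of_mem_slopeCone_of_lt h hzb hza

theorem mem_edge_inter_edge_of_isAncestor {a b : V} (ha : a ≠ T.root) (hb : b ≠ T.root)
    (hab : a ≠ b) (hba : T.IsAncestor b a) {p : Plane}
    (hpa : p ∈ segment ℝ (T.pos (T.parent a)) (T.pos a))
    (hpb : p ∈ segment ℝ (T.pos (T.parent b)) (T.pos b)) :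
    ∃ w, (w = a ∨ w = T.parent a) ∧ (w = b ∨ w = T.parent b) ∧ p = T.pos w := by
  obtain ⟨-, hba⟩ := hba.eq_or_isAncestor_parent.resolve_left (Ne.symm hab)
  obtain ⟨t, ⟨-, ht₁⟩, rfl⟩ := exists_eq_of_mem_edge hb hpb
  have hle : (T.pos (T.parent b) + t • dirOfSlope (T.slope b)) 0 ≤ T.pos b 0 := by
    rw [pos_of_ne_root hb]
    simp only [PiLp.add_apply, PiLp.smul_apply, smul_eq_mul]
    nlinarith [dirOfSlope_apply_zero_pos (T.slope b)]
  obtain ⟨rfl, hp⟩ := eq_parent_of_mem_edge_of_apply_zero_le ha hba hpa hle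
  exact ⟨T.parent a, .inr rfl, .inl rfl, hp⟩

theorem mem_edge_inter_edge {a b : V} (ha : a ≠ T.root) (hb : b ≠ T.root) (hab : a ≠ b)
    {p : Plane} (hpa : p ∈ segment ℝ (T.pos (T.parent a)) (T.pos a))
    (hpb : p ∈ segment ℝ (T.pos (T.parent b)) (T.pos b)) :
    ∃ w, (w = a ∨ w = T.parent a) ∧ (w = b ∨ w = T.parent b) ∧ p = T.pos w := by
  by_cases hba : T.IsAncestor b a
  · exact mem_edge_inter_edge_of_isAncestor ha hb hab hba hpa hpb
  by_cases hab' : T.IsAncestor a b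
  · obtain ⟨w, hwb, hwa, hp⟩ :=
      mem_edge_inter_edge_of_isAncestor hb ha (Ne.symm hab) hab' hpb hpa
    exact ⟨w, hwa, hwb, hp⟩
  obtain ⟨a', b', m, ha', hb', hne, hma, hmb⟩ := exists_siblings_of_not_isAncestor hab' hba
  obtain ⟨ha'r, rfl⟩ := hma
  obtain ⟨hb'r, hm⟩ := hmb
  have hpm : p = T.pos (T.parent a') := by
    rw [← sub_eq_zero]
    refine eq_zero_of_mem_cone_of_siblings ⟨ha'r, rfl⟩ ⟨hb'r, hm⟩ hne
      (sub_mem_cone_of_mem_edge ha ha'r ha' hpa) ?_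
    rw [← hm]; exact sub_mem_cone_of_mem_edge hb hb'r hb' hpb
  obtain ⟨hma, -⟩ :=
    eq_parent_of_mem_edge_of_apply_zero_le ha (ha'.parent ha'r) hpa (by rw [hpm])
  obtain ⟨hmb, hp⟩ := eq_parent_of_mem_edge_of_apply_zero_le hb (hm ▸ hb'.parent hb'r) hpb
    (by rw [hpm])
  exact ⟨T.parent a, .inr rfl, .inr (hma.symm.trans hmb), hma ▸ hpm⟩

theorem pos_not_mem_edge {a w : V} (ha : a ≠ T.root) (hwa : w ≠ a) (hwp : w ≠ T.parent a) :
    T.pos w ∉ segment ℝ (T.pos (T.parent a)) (T.pos a) := by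
  intro hp
  by_cases hw : w = T.root
  · subst hw
    exact hwp (eq_parent_of_mem_edge_of_apply_zero_le ha (root_isAncestor _) hp le_rfl).1
  obtain ⟨v, hva, hvw, hv⟩ :=
    mem_edge_inter_edge ha hw (Ne.symm hwa) hp (right_mem_segment _ _ _)
  rcases hvw with rfl | rfl
  · rcases hva with rfl | rfl <;> contradiction
  · exact (pos_parent_apply_zero_lt hw).ne (congrArg (· 0) hv).symm

theorem pos_injective : Function.Injective T.pos := by
  intro u w h
  by_contra hne
  wlog hw : w ≠ T.root generalizing u w
  · exact this h.symm (Ne.symm hne) (not_not.1 hw ▸ hne)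
  by_cases hu : u = T.parent w
  · subst hu
    exact (pos_parent_apply_zero_lt hw).ne (congrArg (· 0) h)
  · exact pos_not_mem_edge hw hne hu (h ▸ right_mem_segment _ _ _)

end ParentTree

namespace SimpleGraph

variable {V : Type*} {G : SimpleGraph V}

theorem IsTree.exists_adj_dist_add_one (hG : G.IsTree) (r : V) {u : V} (hu : u ≠ r) :
    ∃ v, G.Adj u v ∧ G.dist r v + 1 = G.dist r u := by
  obtain ⟨p, hp⟩ := hG.connected.exists_walk_length_eq_dist u r
  cases p with
  | nil => exact absurd rfl hu
  | @cons _ v _ huv q =>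
    have hq : G.dist v r ≤ q.length := dist_le q
    rw [Walk.length_cons] at hp
    rw [dist_comm] at hp hq
    have := hG.dist_eq_dist_add_one_of_adj r huv
    exact ⟨v, huv, by omega⟩

theorem IsTree.eq_of_adj_of_dist_add_one (hG : G.IsTree) {r u v w : V} (hv : G.Adj u v)
    (hw : G.Adj u w) (hdv : G.dist r v + 1 = G.dist r u) (hdw : G.dist r w + 1 = G.dist r u) :
    v = w := by
  have geodesic : ∀ {x} (h : G.Adj u x), G.dist r x + 1 = G.dist r u →
      ∃ p : G.Walk u r, p.IsPath ∧ p.snd = x := by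
    intro x h hx
    obtain ⟨p, hp⟩ := hG.connected.exists_walk_length_eq_dist x r
    refine ⟨.cons h p, Walk.isPath_of_length_eq_dist _ ?_, Walk.snd_cons ..⟩
    rw [Walk.length_cons, hp, dist_comm, hx, dist_comm]
  obtain ⟨p, hp, rfl⟩ := geodesic hv hdv
  obtain ⟨q, hq, rfl⟩ := geodesic hw hdw
  rw [Subtype.mk.inj <| (hG.isAcyclic.subsingleton_path u r).elim ⟨p, hp⟩ ⟨q, hq⟩]

theorem IsTree.exists_parentTree (hG : G.IsTree) :
    ∃ T : ParentTree V, G = SimpleGraph.fromRel T.Step := by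
  obtain ⟨r⟩ := hG.connected.nonempty
  choose! parent hadj hdist using fun u (hu : u ≠ r) => hG.exists_adj_dist_add_one r hu
  refine ⟨⟨r, parent, G.dist r, hdist⟩, ?_⟩
  ext u v
  simp only [fromRel_adj, ParentTree.Step]
  constructor
  · intro huv
    refine ⟨huv.ne, ?_⟩
    rcases hG.dist_eq_dist_add_one_of_adj r huv with h | h
    · have hu : u ≠ r := by rintro rfl; simp at h
      exact .inl ⟨hu, hG.eq_of_adj_of_dist_add_one (hadj u hu) huv (hdist u hu) h.symm⟩
    · have hv : v ≠ r := by rintro rfl; simp at h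
      exact .inr ⟨hv, hG.eq_of_adj_of_dist_add_one (hadj v hv) huv.symm (hdist v hv) h.symm⟩
  · rintro ⟨-, ⟨hu, rfl⟩ | ⟨hv, rfl⟩⟩
    · exact hadj u hu
    · exact (hadj v hv).symm

end SimpleGraph

theorem ParentTree.exists_unit_planarDrawing {V : Type} [Fintype V] (T : ParentTree V) :
    ∃ ρ : V → Plane, IsPlanarDrawing (SimpleGraph.fromRel T.Step) ρ ∧
      ∀ u v : V, (SimpleGraph.fromRel T.Step).Adj u v → dist (ρ u) (ρ v) = 1 := by
  classical
  have hstep : ∀ ⦃u v⦄, (SimpleGraph.fromRel T.Step).Adj u v → T.Step u v ∨ T.Step v u :=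
    fun u v h => (SimpleGraph.fromRel_adj _ u v).1 h |>.2
  have hlength : ∀ ⦃u v⦄, T.Step u v → dist (T.pos u) (T.pos v) = 1 := by
    rintro u _ ⟨hu, rfl⟩
    rw [dist_eq_norm, T.pos_of_ne_root hu, add_sub_cancel_left, norm_dirOfSlope]
  refine ⟨T.pos, IsPlanarDrawing.of_orientation T.Step hstep T.pos_injective ?_ ?_, ?_⟩
  · rintro u _ w ⟨hu, rfl⟩ hwu hwv
    rw [segment_symm]
    exact T.pos_not_mem_edge hu hwu hwv
  · rintro u _ x _ ⟨hu, rfl⟩ ⟨hx, rfl⟩ hne p ⟨hpu, hpx⟩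
    rw [segment_symm] at hpu hpx
    exact T.mem_edge_inter_edge hu hx (by rintro rfl; exact hne rfl) hpu hpx
  · intro u v h
    rcases hstep h with h | h
    · exact hlength h
    · rw [dist_comm]; exact hlength h

/-- Every finite tree admits a planar straight-line drawing in which every
edge has length exactly 1. -/
theorem tree_unit_drawing {V : Type} [Fintype V] (G : SimpleGraph V)
    (hconn : G.Connected) (hacyclic : G.IsAcyclic) :
    ∃ ρ : V → Plane, IsPlanarDrawing G ρ ∧
      ∀ u v : V, G.Adj u v → dist (ρ u) (ρ v) = 1 := by
  obtain ⟨T, rfl⟩ := (⟨hconn, hacyclic⟩ : G.IsTree).exists_parentTree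
  exact T.exists_unit_planarDrawing
end
end
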